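/- Let G be a finite connected simple graph of order n such that 2·τ(G) > n, and let W be its (unique) twin class of cardinality τ(G). If the subgraph of G induced by W is empty (edgeless), then β_p(G) = τ(G). -/

import Mathlib

/-!
Twins are at the same distance from every set that contains neither or both of them, so a
locating partition puts the vertices of a twin class `W` into distinct parts: `β_p(G) ≥ |W|`.

Conversely, `|V \ W| < |W|` gives a retraction `g` of `V` onto `W` that is injective outside `W`
and has a singleton fibre `{u}`; its `|W|` fibres form the partition. Suppose a vertex `w ∈ W` and
some `x ∉ W` with `g x = w` had the same distances to all fibres. Since `W` is independent,
`d(x, u) = d(w, u) = 2`, so `x`, like `w`, has no neighbour in `W`. As `x` is not a twin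
of `w`, some `a ∉ W` is adjacent to exactly one of them; but the fibre `{g a, a}`, with
`g a ≠ w`, has distance `min 2 d(w, a)` from `w` and `min 2 d(x, a)` from `x`.
-/

open Classical SimpleGraph

noncomputable section

/-- The distance from a vertex to a set of vertices. -/
def setDist {V : Type*} (G : SimpleGraph V) (u : V) (S : Set V) : ℕ :=
  sInf ((G.dist u) '' S)

/-- A locating partition of a graph: a partition of the vertex set such that every
vertex is uniquely determined by its vector of distances to the parts. -/
def IsLocatingPartition {V : Type*} (G : SimpleGraph V) (P : Set (Set V)) : Prop :=
  Setoid.IsPartition P ∧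
    ∀ u v : V, (∀ S ∈ P, setDist G u S = setDist G v S) → u = v

/-- The partition dimension: the minimum cardinality of a locating partition. -/
def partitionDim {V : Type*} (G : SimpleGraph V) : ℕ :=
  sInf {k | ∃ P : Set (Set V), IsLocatingPartition G P ∧ P.ncard = k}

/-- Two vertices are twins if they have the same neighbors other than themselves. -/
def IsTwin {V : Type*} (G : SimpleGraph V) (u v : V) : Prop :=
  G.neighborSet u \ {v} = G.neighborSet v \ {u}

/-- The twin class of a vertex. -/
def twinClass {V : Type*} (G : SimpleGraph V) (u : V) : Set V :=
  {v | IsTwin G u v}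

/-- The twin number: the maximum cardinality of a twin class. -/
def twinNumber {V : Type*} (G : SimpleGraph V) : ℕ :=
  sSup {k | ∃ u : V, (twinClass G u).ncard = k}

section

variable {V : Type*} {G : SimpleGraph V} {u v w x : V}

theorem isTwin_iff_adj :
    IsTwin G u v ↔ ∀ a, a ≠ u → a ≠ v → (G.Adj u a ↔ G.Adj v a) := by
  simp only [IsTwin, Set.ext_iff, Set.mem_sdiff, mem_neighborSet, Set.mem_singleton_iff]
  refine forall_congr' fun a => ?_
  by_cases hau : a = u <;> by_cases hav : a = v <;> simp_all [eq_comm]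

theorem IsTwin.symm (h : IsTwin G u v) : IsTwin G v u := Eq.symm h

theorem IsTwin.trans (h₁ : IsTwin G u v) (h₂ : IsTwin G v w) : IsTwin G u w := by
  rcases eq_or_ne u v with rfl | huv; · exact h₂
  rcases eq_or_ne v w with rfl | hvw; · exact h₁
  rcases eq_or_ne u w with rfl | huw; · rfl
  rw [isTwin_iff_adj] at h₁ h₂ ⊢
  intro a hau haw
  rcases eq_or_ne a v with rfl | hav
  · rw [G.adj_comm u, h₂ u huv huw, G.adj_comm w, h₁ w huw.symm hvw.symm, G.adj_comm]
  · exact (h₁ a hau hav).trans (h₂ a hav haw)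

theorem mem_twinClass_self (G : SimpleGraph V) (u : V) : u ∈ twinClass G u := rfl

theorem mem_twinClass_of_isTwin (hv : v ∈ twinClass G u) (h : IsTwin G v w) :
    w ∈ twinClass G u :=
  IsTwin.trans hv h

theorem pairwise_isTwin_twinClass (G : SimpleGraph V) (u : V) :
    (twinClass G u).Pairwise (IsTwin G) :=
  fun _ hv _ hw _ => IsTwin.trans (IsTwin.symm hv) hw

theorem IsTwin.dist_le (hG : G.Connected) (h : IsTwin G u v) (hu : x ≠ u) (hv : x ≠ v) :
    G.dist v x ≤ G.dist u x := by
  obtain ⟨p, hp⟩ := hG.exists_walk_length_eq_dist u x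
  cases p with
  | nil => exact absurd rfl hu
  | @cons _ b _ hub q =>
    rw [← hp, Walk.length_cons]
    rcases eq_or_ne b v with rfl | hbv
    · exact (SimpleGraph.dist_le q).trans (Nat.le_succ _)
    · have hvb : G.Adj v b := (isTwin_iff_adj.mp h b (G.ne_of_adj hub).symm hbv).mp hub
      exact SimpleGraph.dist_le (Walk.cons hvb q)

theorem IsTwin.dist_eq (hG : G.Connected) (h : IsTwin G u v) (hu : x ≠ u) (hv : x ≠ v) :
    G.dist u x = G.dist v x :=
  le_antisymm (h.symm.dist_le hG hv hu) (h.dist_le hG hu hv)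

theorem IsTwin.dist_eq_two (hG : G.Connected) (h : IsTwin G u v) (hne : u ≠ v)
    (hadj : ¬G.Adj u v) : G.dist u v = 2 := by
  obtain ⟨p⟩ := hG.preconnected u v
  cases p with
  | nil => exact absurd rfl hne
  | @cons _ a _ hua _ =>
    have hva : G.Adj v a :=
      (isTwin_iff_adj.mp h a (G.ne_of_adj hua).symm fun hav => hadj (hav ▸ hua)).mp hua
    have hedist := edist_eq_two_iff.mpr ⟨hne, hadj, a, (mem_commonNeighbors G).mpr ⟨hua, hva⟩⟩
    exact_mod_cast (hG.preconnected u v).coe_dist_eq_edist.trans hedist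

theorem dist_eq_of_mem_twinClass (hG : G.Connected) (hx : x ∉ twinClass G u)
    (hv : v ∈ twinClass G u) (hw : w ∈ twinClass G u) : G.dist x v = G.dist x w := by
  rw [dist_comm, dist_comm (u := x)]
  rcases eq_or_ne v w with rfl | hvw
  · rfl
  · exact (pairwise_isTwin_twinClass G u hv hw hvw).dist_eq hG (ne_of_mem_of_not_mem hv hx).symm
      (ne_of_mem_of_not_mem hw hx).symm

theorem setDist_singleton (G : SimpleGraph V) (u a : V) : setDist G u {a} = G.dist u a := by
  simp [setDist]

theorem setDist_pair (G : SimpleGraph V) (u a b : V) :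
    setDist G u {a, b} = min (G.dist u a) (G.dist u b) := by
  rw [setDist, Set.image_pair, csInf_pair]

theorem setDist_eq_zero_of_mem {S : Set V} (h : u ∈ S) : setDist G u S = 0 :=
  Nat.eq_zero_of_le_zero (Nat.sInf_le ⟨u, h, dist_self⟩)

theorem mem_of_setDist_eq_zero (hG : G.Connected) {S : Set V} (hS : S.Nonempty)
    (h : setDist G u S = 0) : u ∈ S := by
  rcases Nat.sInf_eq_zero.mp h with ⟨x, hx, hux⟩ | h
  · rwa [hG.dist_eq_zero_iff.mp hux]
  · exact absurd (Set.image_eq_empty.mp h) hS.ne_empty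

theorem IsTwin.setDist_eq (hG : G.Connected) (h : IsTwin G u v) {S : Set V}
    (hS : u ∈ S ↔ v ∈ S) : setDist G u S = setDist G v S := by
  by_cases hu : u ∈ S
  · rw [setDist_eq_zero_of_mem hu, setDist_eq_zero_of_mem (hS.mp hu)]
  · have hv : v ∉ S := mt hS.mpr hu
    refine congrArg sInf (Set.image_congr fun x hx => h.dist_eq hG ?_ ?_)
    · rintro rfl; exact hu hx
    · rintro rfl; exact hv hx

theorem isLocatingPartition_of_forall_mem_part (hG : G.Connected) {P : Set (Set V)}
    (hP : Setoid.IsPartition P)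
    (h : ∀ S ∈ P, ∀ u ∈ S, ∀ v ∈ S, (∀ T ∈ P, setDist G u T = setDist G v T) → u = v) :
    IsLocatingPartition G P := by
  refine ⟨hP, fun u v huv => ?_⟩
  obtain ⟨S, ⟨hS, huS⟩, -⟩ := hP.2 u
  have hvS : v ∈ S := mem_of_setDist_eq_zero hG ⟨u, huS⟩
    ((huv S hS).symm.trans (setDist_eq_zero_of_mem huS))
  exact h S hS u huS v hvS huv

theorem IsLocatingPartition.ncard_le_of_pairwise_isTwin [Finite V] (hG : G.Connected)
    {P : Set (Set V)} (hP : IsLocatingPartition G P) {W : Set V} (hW : W.Pairwise (IsTwin G)) :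
    W.ncard ≤ P.ncard := by
  choose part hpart using fun v => (hP.1.2 v).exists
  have mem_part : ∀ {v S}, S ∈ P → v ∈ S → S = part v := fun hS hv =>
    Setoid.eq_of_mem_eqv_class hP.1.2 hS hv (hpart _).1 (hpart _).2
  refine Set.ncard_le_ncard_of_injOn part (fun v _ => (hpart v).1) (fun v hv w hw hvw => ?_)
    P.toFinite
  by_contra hne
  refine hne (hP.2 v w fun S hS => (hW hv hw hne).setDist_eq hG ⟨fun hvS => ?_, fun hwS => ?_⟩)
  · rw [mem_part hS hvS, hvw]; exact (hpart w).2
  · rw [mem_part hS hwS, ← hvw]; exact (hpart v).2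

theorem IsLocatingPartition.partitionDim_eq_ncard {P : Set (Set V)}
    (hP : IsLocatingPartition G P) (hmin : ∀ Q, IsLocatingPartition G Q → P.ncard ≤ Q.ncard) :
    partitionDim G = P.ncard :=
  le_antisymm (Nat.sInf_le ⟨P, hP, rfl⟩)
    (le_csInf ⟨_, P, hP, rfl⟩ fun _ ⟨Q, hQ, hk⟩ => hk ▸ hmin Q hQ)

structure IsPairingRetraction (W : Set V) (w₀ : V) (g : V → V) : Prop where
  apply_mem : ∀ v, g v ∈ W
  apply_of_mem : ∀ w ∈ W, g w = w
  injOn_compl : Set.InjOn g Wᶜ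
  preimage_base : g ⁻¹' {w₀} = {w₀}

namespace IsPairingRetraction

variable {W : Set V} {w₀ : V} {g : V → V}

theorem preimage_apply_of_notMem (hg : IsPairingRetraction W w₀ g) {a : V} (ha : a ∉ W) :
    g ⁻¹' {g a} = {g a, a} := by
  ext y
  simp only [Set.mem_preimage, Set.mem_singleton_iff, Set.mem_insert_iff]
  constructor
  · intro hy
    by_cases hyW : y ∈ W
    · exact .inl (hg.apply_of_mem y hyW ▸ hy)
    · exact .inr (hg.injOn_compl hyW ha hy)
  · rintro (rfl | rfl)
    · exact hg.apply_of_mem _ (hg.apply_mem a)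
    · rfl

theorem isPartition (hg : IsPairingRetraction W w₀ g) :
    Setoid.IsPartition ((fun w => g ⁻¹' {w}) '' W) := by
  refine ⟨fun ⟨w, hw, hempty⟩ => ?_, fun v => ⟨g ⁻¹' {g v}, ⟨⟨g v, hg.apply_mem v, rfl⟩, rfl⟩, ?_⟩⟩
  · exact (hempty ▸ hg.apply_of_mem w hw : w ∈ (∅ : Set V))
  · rintro _ ⟨⟨w, -, rfl⟩, hv : g v = w⟩
    rw [hv]

theorem ncard_fibers (hg : IsPairingRetraction W w₀ g) :
    ((fun w => g ⁻¹' {w}) '' W).ncard = W.ncard := by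
  refine Set.InjOn.ncard_image fun w hw w' _ h => ?_
  have : w ∈ g ⁻¹' {w'} := h ▸ hg.apply_of_mem w hw
  rwa [Set.mem_preimage, hg.apply_of_mem w hw, Set.mem_singleton_iff] at this

end IsPairingRetraction

theorem exists_isPairingRetraction [Finite V] {W : Set V} {w₀ : V} (hw₀ : w₀ ∈ W)
    (hW : Wᶜ.ncard < W.ncard) : ∃ g, IsPairingRetraction W w₀ g := by
  have hle : Wᶜ.encard ≤ (W \ {w₀}).encard := by
    rw [← Wᶜ.toFinite.cast_ncard_eq, ← (W \ {w₀}).toFinite.cast_ncard_eq,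
      Set.ncard_sdiff_singleton_of_mem hw₀]
    exact_mod_cast (by omega)
  have : Nonempty V := ⟨w₀⟩
  obtain ⟨f, hfW, hf⟩ := Wᶜ.toFinite.exists_injOn_of_encard_le hle
  refine ⟨W.piecewise id f, fun v => ?_, fun w hw => W.piecewise_eq_of_mem _ _ hw,
    hf.congr (W.piecewise_eqOn_compl _ _).symm, ?_⟩
  · by_cases hv : v ∈ W
    · rwa [W.piecewise_eq_of_mem _ _ hv]
    · rw [W.piecewise_eq_of_notMem _ _ hv]; exact (hfW hv).1
  · ext v
    by_cases hv : v ∈ W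
    · simp [W.piecewise_eq_of_mem _ _ hv]
    · simp only [Set.mem_preimage, W.piecewise_eq_of_notMem _ _ hv, Set.mem_singleton_iff]
      exact iff_of_false (hfW hv).2 (ne_of_mem_of_not_mem hw₀ hv).symm

theorem exists_setDist_ne_of_apply_eq (hG : G.Connected)
    (hindep : ∀ v ∈ twinClass G u, ∀ w ∈ twinClass G u, ¬G.Adj v w) {g : V → V}
    (hg : IsPairingRetraction (twinClass G u) u g) {w x : V} (hw : w ∈ twinClass G u)
    (hx : x ∉ twinClass G u) (hgx : g x = w) :
    ∃ T ∈ (fun w => g ⁻¹' {w}) '' twinClass G u, setDist G w T ≠ setDist G x T := by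
  by_contra! hall
  have hu := mem_twinClass_self G u
  have hwu : w ≠ u := by
    rintro rfl
    have hxw : x ∈ g ⁻¹' {w} := hgx
    rw [hg.preimage_base, Set.mem_singleton_iff] at hxw
    exact hx (hxw ▸ hw)
  have hxu : G.dist x u = 2 := by
    have h : setDist G w {u} = setDist G x {u} := hg.preimage_base ▸ hall _ ⟨u, hu, rfl⟩
    rw [setDist_singleton, setDist_singleton] at h
    rw [← h, (pairwise_isTwin_twinClass G u hw hu hwu).dist_eq_two hG hwu (hindep w hw u hu)]
  have hxW : ∀ v ∈ twinClass G u, G.dist x v = 2 := fun v hv =>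
    (dist_eq_of_mem_twinClass hG hx hv hu).trans hxu
  obtain ⟨a, haw, hax, hdiff⟩ : ∃ a, a ≠ w ∧ a ≠ x ∧ ¬(G.Adj w a ↔ G.Adj x a) := by
    have := mt (mem_twinClass_of_isTwin hw) hx
    simpa [isTwin_iff_adj] using this
  have ha : a ∉ twinClass G u := fun ha => hdiff <| iff_of_false (hindep w hw a ha) fun hxa => by
    simp [← dist_eq_one_iff_adj, hxW a ha] at hxa
  have hga : g a ≠ w := fun h => hax (hg.injOn_compl ha hx (h.trans hgx.symm))
  have h : setDist G w {g a, a} = setDist G x {g a, a} :=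
    hg.preimage_apply_of_notMem ha ▸ hall _ ⟨g a, hg.apply_mem a, rfl⟩
  rw [setDist_pair, setDist_pair, hxW _ (hg.apply_mem a),
    (pairwise_isTwin_twinClass G u hw (hg.apply_mem a) hga.symm).dist_eq_two hG hga.symm
      (hindep w hw _ (hg.apply_mem a))] at h
  rw [← dist_eq_one_iff_adj, ← dist_eq_one_iff_adj] at hdiff
  have hwa : G.dist w a ≠ 0 := fun h0 => haw (hG.dist_eq_zero_iff.mp h0).symm
  have hxa : G.dist x a ≠ 0 := fun h0 => hax (hG.dist_eq_zero_iff.mp h0).symm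
  omega

theorem isLocatingPartition_fibers (hG : G.Connected)
    (hindep : ∀ v ∈ twinClass G u, ∀ w ∈ twinClass G u, ¬G.Adj v w) {g : V → V}
    (hg : IsPairingRetraction (twinClass G u) u g) :
    IsLocatingPartition G ((fun w => g ⁻¹' {w}) '' twinClass G u) := by
  refine isLocatingPartition_of_forall_mem_part hG hg.isPartition ?_
  rintro _ ⟨w, -, rfl⟩ x (hx : g x = w) y (hy : g y = w) hxy
  by_cases hxW : x ∈ twinClass G u <;> by_cases hyW : y ∈ twinClass G u
  · rw [← hg.apply_of_mem x hxW, hx, ← hy, hg.apply_of_mem y hyW]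
  · obtain ⟨T, hT, hne⟩ := exists_setDist_ne_of_apply_eq hG hindep hg hxW hyW
      (by rw [hy, ← hx, hg.apply_of_mem x hxW])
    exact absurd (hxy T hT) hne
  · obtain ⟨T, hT, hne⟩ := exists_setDist_ne_of_apply_eq hG hindep hg hyW hxW
      (by rw [hx, ← hy, hg.apply_of_mem y hyW])
    exact absurd (hxy T hT).symm hne
  · exact hg.injOn_compl hxW hyW (hx.trans hy.symm)

end

/-- For a connected graph `G` of order `n` with `2·τ(G) > n`, if the twin class
`W` of maximum cardinality induces an edgeless subgraph, then `β_p(G) = τ(G)`. -/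
theorem partitionDim_eq_twinNumber_of_indep {V : Type*} [Fintype V]
    (G : SimpleGraph V) (hG : G.Connected) (n : ℕ) (hn : Fintype.card V = n)
    (hτ : n < 2 * twinNumber G)
    (W : Set V) (hW : ∃ u : V, W = twinClass G u)
    (hWcard : W.ncard = twinNumber G)
    (hindep : ∀ u ∈ W, ∀ v ∈ W, ¬ G.Adj u v) :
    partitionDim G = twinNumber G := by
  obtain ⟨u, rfl⟩ := hW
  have hcompl : (twinClass G u)ᶜ.ncard < (twinClass G u).ncard := by
    have := Set.ncard_add_ncard_compl (twinClass G u)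
    rw [Nat.card_eq_fintype_card] at this
    omega
  obtain ⟨g, hg⟩ := exists_isPairingRetraction (mem_twinClass_self G u) hcompl
  calc partitionDim G = ((fun w => g ⁻¹' {w}) '' twinClass G u).ncard :=
        (isLocatingPartition_fibers hG hindep hg).partitionDim_eq_ncard fun Q hQ =>
          hg.ncard_fibers ▸ hQ.ncard_le_of_pairwise_isTwin hG (pairwise_isTwin_twinClass G u)
    _ = twinNumber G := hg.ncard_fibers.trans hWcard
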